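/- Fix an integer e ≥ 1, and for n ≥ 0 let Jₙ = (Tⁿ) be the ideal of W(k)[[T]] generated by Tⁿ. For every n with 0 ≤ n ≤ ep − 1, the inclusion of rings W(k)[[T]] ⊆ R̃e(k) induces a ring isomorphism W(k)[[T]]/Jₙ ≅ R̃e(k)/Iₙ. -/

import Mathlib

/-!
Piano rings (A. Vasiu, "Shimura varieties and the Mumford–Tate conjecture", §2.1).

`W(k)` is the ring of `p`-typical Witt vectors of a perfect field `k` of characteristic `p`,
`B(k) = W(k)[1/p]` its fraction field.  For `e ≥ 1`, the piano ring `R̃e(k)` of resonance `e`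
consists of the power series `Σ aₙ Tⁿ ∈ B(k)[[T]]` with `aₙ ⬝ (⌊n/e⌋)! ∈ W(k)` for all `n`,
and the piano ring `Re(k)` of convergent resonance `e` consists of those for which moreover
`bₙ := aₙ ⬝ (⌊n/e⌋)!` converges `p`-adically to `0`.
-/

noncomputable section

open PowerSeries

variable (p : ℕ) [Fact p.Prime] (k : Type*) [Field k] [CharP k p] [PerfectRing k p]

/-- `x` lies in the canonical image of `W(k)` inside `B(k)`. -/
def InW (x : FractionRing (WittVector p k)) : Prop :=
  ∃ w : WittVector p k,
    algebraMap (WittVector p k) (FractionRing (WittVector p k)) w = x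

/-- The piano ring `R̃e(k)` of resonance `e`: power series `Σ aₙ Tⁿ` over `B(k)` with
`aₙ ⬝ (⌊n/e⌋)! ∈ W(k)` for all `n`. -/
def pianoTilde (e : ℕ) : Set (PowerSeries (FractionRing (WittVector p k))) :=
  {f | ∀ n : ℕ,
    InW p k (PowerSeries.coeff n f * (Nat.factorial (n / e) : FractionRing (WittVector p k)))}

/-- The piano ring `Re(k)` of convergent resonance `e`: power series `Σ aₙ Tⁿ` over `B(k)`
with `bₙ := aₙ ⬝ (⌊n/e⌋)! ∈ W(k)` for all `n` and `bₙ → 0` `p`-adically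
(for every `m` eventually `bₙ ∈ pᵐ W(k)`). -/
def pianoR (e : ℕ) : Set (PowerSeries (FractionRing (WittVector p k))) :=
  {f | (∀ n : ℕ,
      InW p k (PowerSeries.coeff n f * (Nat.factorial (n / e) : FractionRing (WittVector p k)))) ∧
    ∀ m : ℕ, ∃ N : ℕ, ∀ n ≥ N, ∃ w : WittVector p k,
      algebraMap (WittVector p k) (FractionRing (WittVector p k)) ((p : WittVector p k) ^ m * w)
        = PowerSeries.coeff n f * (Nat.factorial (n / e) : FractionRing (WittVector p k))}

/-- `Iₙ`: the power series in `R̃e(k)` whose coefficients `aₘ` vanish for `m < n`. -/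
def Iset (e n : ℕ) : Set (PowerSeries (FractionRing (WittVector p k))) :=
  {f ∈ pianoTilde p k e | ∀ m < n, PowerSeries.coeff m f = 0}

/-!
For `m < e * p` we have `⌊m/e⌋ < p`, so `(⌊m/e⌋)!` is prime to `p` and hence a unit of `W(k)`.
The defining condition of `R̃e(k)` therefore forces the coefficients `aₘ` with `m < n` to lie in
`W(k)` itself, so a series in `R̃e(k)` agrees below degree `n` with one in `W(k)[[T]]`.
-/

section

variable {p : ℕ} [Fact p.Prime] {k : Type*} [Field k]

theorem InW.sub {x y : FractionRing (WittVector p k)} (hx : InW p k x) (hy : InW p k y) :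
    InW p k (x - y) := by
  obtain ⟨a, rfl⟩ := hx
  obtain ⟨b, rfl⟩ := hy
  exact ⟨a - b, map_sub _ a b⟩

theorem InW.of_mul_isUnit {x : FractionRing (WittVector p k)} {u : WittVector p k}
    (hu : IsUnit u) (hx : InW p k (x * algebraMap _ _ u)) : InW p k x := by
  obtain ⟨w, hw⟩ := hx
  obtain ⟨v, rfl⟩ := hu
  refine ⟨w * ↑v⁻¹, ?_⟩
  rw [map_mul, hw, mul_assoc, ← map_mul, Units.mul_inv, map_one, mul_one]

theorem sub_mem_pianoTilde {e : ℕ} {f g : PowerSeries (FractionRing (WittVector p k))}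
    (hf : f ∈ pianoTilde p k e) (hg : g ∈ pianoTilde p k e) : f - g ∈ pianoTilde p k e := by
  intro m
  rw [map_sub, sub_mul]
  exact (hf m).sub (hg m)

theorem map_mem_pianoTilde (e : ℕ) (g : PowerSeries (WittVector p k)) :
    PowerSeries.map (algebraMap (WittVector p k) (FractionRing (WittVector p k))) g
      ∈ pianoTilde p k e :=
  fun m => ⟨coeff m g * (m / e).factorial, by rw [map_mul, map_natCast, coeff_map]⟩

theorem map_mem_Iset_iff (e n : ℕ) (g : PowerSeries (WittVector p k)) :
    PowerSeries.map (algebraMap (WittVector p k) (FractionRing (WittVector p k))) g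
        ∈ Iset p k e n ↔ g ∈ Ideal.span {(X : PowerSeries (WittVector p k)) ^ n} := by
  have hinj := IsFractionRing.injective (WittVector p k) (FractionRing (WittVector p k))
  simp only [Iset, Set.mem_ofPred_eq, map_mem_pianoTilde, true_and, coeff_map,
    Ideal.mem_span_singleton, X_pow_dvd_iff, hinj.eq_iff' (map_zero _)]

variable [CharP k p]

theorem WittVector.isUnit_natCast_of_not_dvd {N : ℕ} (h : ¬p ∣ N) :
    IsUnit (N : WittVector p k) := by
  refine WittVector.isUnit_of_coeff_zero_ne_zero _ ?_
  rw [← WittVector.constantCoeff_apply, map_natCast]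
  exact mt (CharP.cast_eq_zero_iff k p N).mp h

theorem WittVector.isUnit_factorial_div {e m : ℕ} (hm : m < e * p) :
    IsUnit ((m / e).factorial : WittVector p k) := by
  refine WittVector.isUnit_natCast_of_not_dvd fun hdvd => ?_
  have hlt : m / e < p := Nat.div_lt_of_lt_mul hm
  exact hlt.not_ge ((Nat.Prime.dvd_factorial Fact.out).mp hdvd)

theorem inW_coeff_of_mem_pianoTilde {e m : ℕ} {f : PowerSeries (FractionRing (WittVector p k))}
    (hf : f ∈ pianoTilde p k e) (hm : m < e * p) : InW p k (coeff m f) := by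
  refine InW.of_mul_isUnit (WittVector.isUnit_factorial_div hm) ?_
  rw [map_natCast]
  exact hf m

theorem exists_sub_map_mem_Iset {e n : ℕ} (hn : n ≤ e * p)
    {f : PowerSeries (FractionRing (WittVector p k))} (hf : f ∈ pianoTilde p k e) :
    ∃ g : PowerSeries (WittVector p k),
      f - PowerSeries.map (algebraMap (WittVector p k) (FractionRing (WittVector p k))) g
        ∈ Iset p k e n := by
  have hcoeff : ∀ m, ∃ c : WittVector p k, m < n → algebraMap _ _ c = coeff m f := fun m =>
    if hm : m < n then (inW_coeff_of_mem_pianoTilde hf (hm.trans_le hn)).imp fun _ hc _ => hc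
    else ⟨0, fun h => absurd h hm⟩
  choose c hc using hcoeff
  refine ⟨mk c, sub_mem_pianoTilde hf (map_mem_pianoTilde e _), fun m hm => ?_⟩
  rw [map_sub, coeff_map, coeff_mk, hc m hm, sub_self]

end

theorem quotient_iso_of_le (e : ℕ) (n : ℕ) (hn : n ≤ e * p - 1) :
    -- the inclusion `W(k)[[T]] ⊆ R̃e(k)`:
    (∀ g : PowerSeries (WittVector p k),
      PowerSeries.map (algebraMap (WittVector p k) (FractionRing (WittVector p k))) g
        ∈ pianoTilde p k e) ∧
    -- injectivity of the induced map: the preimage of `Iₙ` is `Jₙ = (Tⁿ)`: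
    (∀ g : PowerSeries (WittVector p k),
      PowerSeries.map (algebraMap (WittVector p k) (FractionRing (WittVector p k))) g
          ∈ Iset p k e n
        ↔ g ∈ Ideal.span {(PowerSeries.X : PowerSeries (WittVector p k)) ^ n}) ∧
    -- surjectivity of the induced map:
    (∀ f ∈ pianoTilde p k e, ∃ g : PowerSeries (WittVector p k),
      f - PowerSeries.map (algebraMap (WittVector p k) (FractionRing (WittVector p k))) g
        ∈ Iset p k e n) :=
  ⟨map_mem_pianoTilde e, map_mem_Iset_iff e n,
    fun _ hf => exists_sub_map_mem_Iset (hn.trans (Nat.sub_le _ _)) hf⟩
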